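/- Let 2 ≤ α ≤ 3. The Horodecki density ρ_α on C³ ⊗ C³, whose entries are ρ_{nn,mm} = 2/21 for all n, m ∈ Z_3, ρ_{n(n+1),n(n+1)} = α/21 and ρ_{n(n+2),n(n+2)} = (5−α)/21 for all n ∈ Z_3 (addition mod 3), with all other entries zero, is separable. -/

import Mathlib

/-!
Write `ρ_α = (2/21) • B + D`, where `B_{j1 j2, k1 k2}` is `1` if `{j1, k2} = {k1, j2}` as
multisets and `0` otherwise, and `D` is diagonal with entries `(α - 2)/21` at `n(n+1)` and
`(3 - α)/21` at `n(n+2)`; these are nonnegative for `2 ≤ α ≤ 3`, so `D` is a mixture of products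
of basis projections. `B` is a phase twirl: summing `|u⟩⟨u| ⊗ |ū⟩⟨ū|` over the phase vectors
`u_n = ψ(e_n)`, `ψ` a character of `Z_3^3`, character orthogonality keeps exactly the entries with
`e_{j1} + e_{k2} = e_{k1} + e_{j2}`, which is the multiset condition because `2 ≠ 0` in `Z_3`.
-/

open Matrix Kronecker
open scoped ComplexOrder

def IsSeparableState
    (ρ : Matrix (ZMod 3 × ZMod 3) (ZMod 3 × ZMod 3) ℂ) : Prop :=
  ∃ (n : ℕ) (w : Fin n → ℝ) (σ τ : Fin n → Matrix (ZMod 3) (ZMod 3) ℂ),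
    (∀ i, 0 ≤ w i) ∧ (∑ i, w i = 1) ∧
    (∀ i, (σ i).PosSemidef ∧ (σ i).trace = 1) ∧
    (∀ i, (τ i).PosSemidef ∧ (τ i).trace = 1) ∧
    ρ = ∑ i, (w i : ℂ) • (σ i ⊗ₖ τ i)

section DensityMatrix

variable {ι : Type*} [Fintype ι]

def IsDensityMatrix (σ : Matrix ι ι ℂ) : Prop :=
  σ.PosSemidef ∧ σ.trace = 1

theorem isDensityMatrix_single [DecidableEq ι] (i : ι) : IsDensityMatrix (single i i (1 : ℂ)) := by
  refine ⟨?_, trace_single_eq_same i 1⟩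
  rw [← diagonal_single]
  exact PosSemidef.diagonal (Pi.single_nonneg.2 zero_le_one)

theorem isDensityMatrix_inv_card_smul_vecMulVec [Nonempty ι] {u : ι → ℂ} (hu : ∀ i, ‖u i‖ = 1) :
    IsDensityMatrix ((Fintype.card ι : ℂ)⁻¹ • vecMulVec u (star u)) := by
  refine ⟨(posSemidef_vecMulVec_self_star u).smul (by positivity), ?_⟩
  have hu' : ∀ i, u i * starRingEnd ℂ (u i) = 1 := fun i => by
    rw [Complex.mul_conj, Complex.normSq_eq_norm_sq, hu]; norm_num
  simp [trace_vecMulVec, dotProduct, hu']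

end DensityMatrix

section ProductMixture

variable {m n : Type*} [Fintype m] [Fintype n]

-- Indexed by `Fin N` so that for `t = 1` this is `IsSeparableState` verbatim.
def IsProductMixture (ρ : Matrix (m × n) (m × n) ℂ) (t : ℝ) : Prop :=
  ∃ (N : ℕ) (w : Fin N → ℝ) (σ : Fin N → Matrix m m ℂ) (τ : Fin N → Matrix n n ℂ),
    (∀ k, 0 ≤ w k) ∧ ∑ k, w k = t ∧ (∀ k, IsDensityMatrix (σ k)) ∧
      (∀ k, IsDensityMatrix (τ k)) ∧ ρ = ∑ k, (w k : ℂ) • (σ k ⊗ₖ τ k)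

theorem isProductMixture_sum {κ : Type*} [Fintype κ] {w : κ → ℝ} {σ : κ → Matrix m m ℂ}
    {τ : κ → Matrix n n ℂ} (hw : ∀ k, 0 ≤ w k) (hσ : ∀ k, IsDensityMatrix (σ k))
    (hτ : ∀ k, IsDensityMatrix (τ k)) :
    IsProductMixture (∑ k, (w k : ℂ) • (σ k ⊗ₖ τ k)) (∑ k, w k) := by
  let e := (Fintype.equivFin κ).symm
  exact ⟨Fintype.card κ, w ∘ e, σ ∘ e, τ ∘ e, fun _ => hw _, e.sum_comp w, fun _ => hσ _,
    fun _ => hτ _, (e.sum_comp fun k => (w k : ℂ) • (σ k ⊗ₖ τ k)).symm⟩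

namespace IsProductMixture

variable {ρ ρ' : Matrix (m × n) (m × n) ℂ} {t t' : ℝ}

theorem add (h : IsProductMixture ρ t) (h' : IsProductMixture ρ' t') :
    IsProductMixture (ρ + ρ') (t + t') := by
  obtain ⟨N, w, σ, τ, hw, rfl, hσ, hτ, rfl⟩ := h
  obtain ⟨N', w', σ', τ', hw', rfl, hσ', hτ', rfl⟩ := h'
  have := isProductMixture_sum (w := Sum.elim w w') (σ := Sum.elim σ σ') (τ := Sum.elim τ τ')
    (Sum.forall.2 ⟨hw, hw'⟩) (Sum.forall.2 ⟨hσ, hσ'⟩) (Sum.forall.2 ⟨hτ, hτ'⟩)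
  simpa only [Fintype.sum_sum_type, Sum.elim_inl, Sum.elim_inr] using this

theorem smul (h : IsProductMixture ρ t) {c : ℝ} (hc : 0 ≤ c) :
    IsProductMixture (c • ρ) (c * t) := by
  obtain ⟨N, w, σ, τ, hw, rfl, hσ, hτ, rfl⟩ := h
  refine ⟨N, c • w, σ, τ, fun k => mul_nonneg hc (hw k), ?_, hσ, hτ, ?_⟩
  · simp [Finset.mul_sum]
  · simp [Finset.smul_sum, smul_smul, ← Complex.coe_smul]

theorem isSeparableState {ρ : Matrix (ZMod 3 × ZMod 3) (ZMod 3 × ZMod 3) ℂ}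
    (h : IsProductMixture ρ 1) : IsSeparableState ρ :=
  h

end IsProductMixture

theorem isProductMixture_diagonal [DecidableEq m] [DecidableEq n] {d : m × n → ℝ} (hd : 0 ≤ d) :
    IsProductMixture (diagonal fun p => (d p : ℂ)) (∑ p, d p) := by
  convert isProductMixture_sum (τ := fun p => single p.2 p.2 1) hd
    (fun p => isDensityMatrix_single p.1) (fun p => isDensityMatrix_single p.2)
  ext i j
  simp only [single_kronecker_single, Prod.mk.eta, smul_single, Matrix.sum_apply, single_apply,
    diagonal_apply, smul_eq_mul, mul_one]
  by_cases hij : i = j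
  · simp [hij]
  · rw [if_neg hij]
    exact (Finset.sum_eq_zero fun c _ => if_neg fun h : c = i ∧ c = j => hij (h.1 ▸ h.2)).symm

end ProductMixture

section PhaseTwirl

variable {ι G : Type*} [AddCommGroup G] [Fintype G] [DecidableEq G]

theorem sum_addChar_kronecker_apply (a : ι → G) (i j : ι × ι) :
    (∑ ψ : AddChar G ℂ, vecMulVec (ψ ∘ a) (star (ψ ∘ a)) ⊗ₖ vecMulVec (star (ψ ∘ a)) (ψ ∘ a)) i j
      = if a i.1 + a j.2 = a j.1 + a i.2 then (Fintype.card G : ℂ) else 0 := by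
  have hψ : ∀ ψ : AddChar G ℂ,
      (vecMulVec (ψ ∘ a) (star (ψ ∘ a)) ⊗ₖ vecMulVec (star (ψ ∘ a)) (ψ ∘ a)) i j
        = ψ (a i.1 + a j.2 - (a j.1 + a i.2)) := fun ψ => by
    simp only [kroneckerMap_apply, vecMulVec_apply, Function.comp_apply, Pi.star_apply,
      Complex.star_def, ← AddChar.map_neg_eq_conj, sub_eq_add_neg, neg_add, AddChar.map_add_eq_mul]
    ring
  simp_rw [Matrix.sum_apply, hψ, AddChar.sum_apply_eq_ite, sub_eq_zero]

theorem isProductMixture_addChar_twirl [Fintype ι] [Nonempty ι] (a : ι → G) :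
    IsProductMixture (of fun i j : ι × ι => if a i.1 + a j.2 = a j.1 + a i.2 then (1 : ℂ) else 0)
      (Fintype.card ι ^ 2) := by
  have hu (ψ : AddChar G ℂ) (i : ι) : ‖(ψ ∘ a) i‖ = 1 := ψ.norm_apply _
  have hw (_ : AddChar G ℂ) : 0 ≤ (Fintype.card ι ^ 2 / Fintype.card G : ℝ) := by positivity
  convert isProductMixture_sum hw (fun ψ => isDensityMatrix_inv_card_smul_vecMulVec (hu ψ))
    (fun ψ => isDensityMatrix_inv_card_smul_vecMulVec (u := star (ψ ∘ a))
      fun i => (norm_star _).trans (hu ψ i)) using 1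
  · simp_rw [star_star, smul_kronecker, kronecker_smul, smul_smul, ← Finset.smul_sum]
    ext i j
    rw [Matrix.smul_apply, sum_addChar_kronecker_apply, of_apply, smul_ite, smul_zero, smul_eq_mul]
    congr
    push_cast
    field_simp
  · simp only [Finset.sum_const, Finset.card_univ, AddChar.card_eq, nsmul_eq_mul]
    field_simp

end PhaseTwirl

theorem single_add_single_eq_iff {ι R : Type*} [DecidableEq ι] [Ring R] (h2 : (2 : R) ≠ 0)
    {a b c d : ι} :
    (Pi.single a 1 + Pi.single b 1 : ι → R) = Pi.single c 1 + Pi.single d 1 ↔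
      (a = c ∧ b = d) ∨ (a = d ∧ b = c) := by
  refine ⟨fun h => ?_, ?_⟩
  · have ha := congrFun h a
    have hb := congrFun h b
    have h11 : (1 + 1 : R) ≠ 0 := one_add_one_eq_two (R := R) ▸ h2
    have h1 : (1 : R) ≠ 0 := fun h => h11 (by rw [h, add_zero])
    simp only [Pi.add_apply, Pi.single_apply] at ha hb
    grind
  · rintro (⟨rfl, rfl⟩ | ⟨rfl, rfl⟩)
    · rfl
    · exact add_comm ..

noncomputable def horodeckiState (α : ℝ) : Matrix (ZMod 3 × ZMod 3) (ZMod 3 × ZMod 3) ℂ :=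
  Matrix.of fun i j : ZMod 3 × ZMod 3 =>
    if i.1 = i.2 ∧ j.1 = j.2 then (2 / 21 : ℂ)
    else if i = j ∧ i.2 = i.1 + 1 then (α : ℂ) / 21
    else if i = j ∧ i.2 = i.1 + 2 then ((5 : ℂ) - (α : ℂ)) / 21
    else 0

noncomputable def horodeckiDiag (α : ℝ) (p : ZMod 3 × ZMod 3) : ℝ :=
  if p.2 = p.1 + 1 then (α - 2) / 21 else if p.2 = p.1 + 2 then (3 - α) / 21 else 0

theorem horodeckiDiag_nonneg {α : ℝ} (hα2 : 2 ≤ α) (hα3 : α ≤ 3) : 0 ≤ horodeckiDiag α := by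
  intro p
  simp only [Pi.zero_apply, horodeckiDiag]
  split_ifs <;> linarith

theorem sum_horodeckiDiag (α : ℝ) : ∑ p, horodeckiDiag α p = 1 / 7 := by
  have hrow (n : ZMod 3) : ∑ m, horodeckiDiag α (n, m) = 1 / 21 := by
    have h12 : n + 1 ≠ n + 2 := by rw [Ne, add_right_inj]; decide
    rw [Fintype.sum_eq_add (n + 1) (n + 2) h12 fun m hm => by simp [horodeckiDiag, hm.1, hm.2]]
    simp only [horodeckiDiag, if_pos, if_neg h12.symm]
    ring
  rw [Fintype.sum_prod_type]
  simp only [hrow, Finset.sum_const, Finset.card_univ, ZMod.card, nsmul_eq_mul]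
  norm_num

theorem horodeckiState_eq (α : ℝ) : horodeckiState α =
    (2 / 21 : ℝ) • of (fun i j : ZMod 3 × ZMod 3 =>
      if (Pi.single i.1 1 + Pi.single j.2 1 : ZMod 3 → ZMod 3) = Pi.single j.1 1 + Pi.single i.2 1
      then (1 : ℂ) else 0) + diagonal (fun p => (horodeckiDiag α p : ℂ)) := by
  ext i j
  simp only [horodeckiState, of_apply, Matrix.add_apply, Matrix.smul_apply, diagonal_apply,
    single_add_single_eq_iff (show (2 : ZMod 3) ≠ 0 by decide)]
  obtain rfl | hij := eq_or_ne i j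
  · obtain ⟨n, m⟩ := i
    obtain ⟨c, rfl⟩ : ∃ c, m = n + c := ⟨m - n, by ring⟩
    obtain rfl | rfl | rfl : c = 0 ∨ c = 1 ∨ c = 2 := by revert c; decide
    all_goals simp [horodeckiDiag, show (2 : ZMod 3) ≠ 0 by decide, show (2 : ZMod 3) ≠ 1 by decide]
    all_goals ring
  · have hne : ¬(i.1 = j.1 ∧ i.2 = j.2) := fun h => hij (Prod.ext h.1 h.2)
    simp [hij, hne, eq_comm (a := j.2)]

/-- For `2 ≤ α ≤ 3`, the Horodecki density `ρ_α` on
`C³ ⊗ C³`, with entries `ρ_{nn,mm} = 2/21`, `ρ_{n(n+1),n(n+1)} = α/21`,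
`ρ_{n(n+2),n(n+2)} = (5−α)/21` and all other entries zero, is separable. -/
theorem horodecki_separable (α : ℝ) (hα2 : 2 ≤ α) (hα3 : α ≤ 3)
    (ρ : Matrix (ZMod 3 × ZMod 3) (ZMod 3 × ZMod 3) ℂ)
    (hρ : ρ = Matrix.of fun i j : ZMod 3 × ZMod 3 =>
        if i.1 = i.2 ∧ j.1 = j.2 then (2 / 21 : ℂ)
        else if i = j ∧ i.2 = i.1 + 1 then (α : ℂ) / 21
        else if i = j ∧ i.2 = i.1 + 2 then ((5 : ℂ) - (α : ℂ)) / 21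
        else 0) :
    IsSeparableState ρ := by
  have hTwirl := (isProductMixture_addChar_twirl
    fun n : ZMod 3 => (Pi.single n 1 : ZMod 3 → ZMod 3)).smul (c := 2 / 21) (by norm_num)
  have hDiag := isProductMixture_diagonal (horodeckiDiag_nonneg hα2 hα3)
  rw [ZMod.card] at hTwirl
  rw [sum_horodeckiDiag] at hDiag
  have hρ' : ρ = horodeckiState α := hρ
  rw [hρ', horodeckiState_eq]
  exact IsProductMixture.isSeparableState (by convert hTwirl.add hDiag using 1; norm_num)
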